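/- For every r > 0, 2^{2r−8}·(2⁸·a₀⁺ + 2⁶·a₁⁺ + 2⁴·2·a₂⁺ + 2²·5·a₃⁺ + 14·a₄⁺) − 1 = ((102 + 7√21)/210)·((6 − √21)/5)^r + ((102 − 7√21)/210)·((6 + √21)/5)^r + 4^r/35 − 1. -/
import Mathlib


noncomputable section

open Real Filter

def P1p (r κ η : ℝ) : ℝ :=
  r * κ ^ (r - 1) * η * (κ - 1) * (η - κ) * (κ * η + 2 * κ + η) * (η - 1) ^ 2
    + 2 * (κ ^ r - 1) * κ * η * (η - 1) ^ 2 * (2 * κ * η + 4 * κ - η ^ 2 - 2 * η - 3)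

def P2p (r κ η : ℝ) : ℝ :=
  r * κ ^ (r - 1) * (κ - 1) * (κ - η) * (η - 1) ^ 2 * (2 * κ * η + κ + η ^ 2 + 2 * η)
    + (η ^ r - 1) * (κ - 1) ^ 2 *
      (8 * κ * η ^ 2 + 4 * η ^ 2 - η * κ ^ 2 - 2 * κ * η - 3 * η - κ ^ 3 - 2 * κ ^ 2 - 3 * κ)

def P3p (r κ η : ℝ) : ℝ :=
  r * κ ^ (r - 1) * (κ - 1) * (κ + 2 * η + 1) * (η - κ) * (η - 1) ^ 2
    + 2 * (κ ^ r - 1) * (2 * κ ^ 2 + 2 * κ * η - η ^ 2 - 2 * η - 1) * (η - 1) ^ 2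

def P4p (r κ η : ℝ) : ℝ :=
  r * κ ^ (r - 1) * (κ - 1) * (κ - η) * (η - 1) ^ 2
    + (η ^ r - 1) * (κ - 1) ^ 2 * (3 * η - κ - 2)

/-- `κ₊ = (6 − √21)/20`. -/
def κp : ℝ := (6 - Real.sqrt 21) / 20

/-- `η₊ = (6 + √21)/20`. -/
def ηp : ℝ := (6 + Real.sqrt 21) / 20

def a1p (r : ℝ) : ℝ :=
  (P1p r κp ηp - P1p r ηp κp) / ((κp - 1) ^ 2 * (ηp - 1) ^ 2 * (κp - ηp) ^ 3)

def a2p (r : ℝ) : ℝ :=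
  (P2p r κp ηp - P2p r ηp κp) / ((κp - 1) ^ 2 * (ηp - 1) ^ 2 * (κp - ηp) ^ 3)

def a3p (r : ℝ) : ℝ :=
  (P3p r κp ηp - P3p r ηp κp) / ((κp - 1) ^ 2 * (ηp - 1) ^ 2 * (κp - ηp) ^ 3)

def a4p (r : ℝ) : ℝ :=
  (P4p r κp ηp - P4p r ηp κp) / ((κp - 1) ^ 2 * (ηp - 1) ^ 2 * (κp - ηp) ^ 3)

/-- `a₀⁺ = 1 − a₁⁺ − a₂⁺ − a₃⁺ − a₄⁺`. -/
def a0p (r : ℝ) : ℝ := 1 - a1p r - a2p r - a3p r - a4p r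


private lemma s21_sq : Real.sqrt 21 ^ 2 = 21 := Real.sq_sqrt (by norm_num)

private lemma s21_gt : (4:ℝ) < Real.sqrt 21 := by
  nlinarith [Real.sq_sqrt (show (0:ℝ) ≤ 21 by norm_num), Real.sqrt_nonneg 21]

private lemma s21_lt : Real.sqrt 21 < 5 := by
  nlinarith [Real.sq_sqrt (show (0:ℝ) ≤ 21 by norm_num), Real.sqrt_nonneg 21]

private lemma kp_pos : (0:ℝ) < κp := by
  have := s21_lt; unfold κp; linarith

private lemma ep_pos : (0:ℝ) < ηp := by
  have := s21_gt; unfold ηp; linarith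

private lemma Dne : ((κp - 1) ^ 2 * (ηp - 1) ^ 2 * (κp - ηp) ^ 3) ≠ 0 := by
  have h1 := s21_gt; have h2 := s21_lt
  have hk1 : κp - 1 ≠ 0 := by unfold κp; intro h; nlinarith
  have he1 : ηp - 1 ≠ 0 := by unfold ηp; intro h; nlinarith
  have hke : κp - ηp ≠ 0 := by unfold κp ηp; intro h; nlinarith
  exact mul_ne_zero (mul_ne_zero (pow_ne_zero _ hk1) (pow_ne_zero _ he1)) (pow_ne_zero _ hke)

private lemma hZr (r : ℝ) : κp ^ r = κp ^ (r - 1) * κp := by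
  rw [← Real.rpow_add_one (ne_of_gt kp_pos) (r - 1)]; ring_nf

private lemma hWr (r : ℝ) : ηp ^ r = ηp ^ (r - 1) * ηp := by
  rw [← Real.rpow_add_one (ne_of_gt ep_pos) (r - 1)]; ring_nf

private lemma ha1 (r : ℝ) : a1p r = ((-288:ℝ)/1225) + ((-3729:ℝ)/4900) * ((6 + Real.sqrt 21) / 20) ^ (r - 1) + ((-543:ℝ)/2450) * ((6 + Real.sqrt 21) / 20) ^ (r - 1) * Real.sqrt 21 + ((-3729:ℝ)/4900) * ((6 - Real.sqrt 21) / 20) ^ (r - 1) + ((543:ℝ)/2450) * ((6 - Real.sqrt 21) / 20) ^ (r - 1) * Real.sqrt 21 + ((193:ℝ)/140) * r * ((6 + Real.sqrt 21) / 20) ^ (r - 1) + ((-29:ℝ)/245) * r * ((6 + Real.sqrt 21) / 20) ^ (r - 1) * Real.sqrt 21 + ((193:ℝ)/140) * r * ((6 - Real.sqrt 21) / 20) ^ (r - 1) + ((29:ℝ)/245) * r * ((6 - Real.sqrt 21) / 20) ^ (r - 1) * Real.sqrt 21 := by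
  rw [a1p, div_eq_iff Dne, P1p, P1p, hZr r, hWr r]
  simp only [κp, ηp]
  linear_combination (((-537:ℝ)/218750000) * Real.sqrt 21 * Real.sqrt 21 * Real.sqrt 21 + ((-9:ℝ)/6125000000) * Real.sqrt 21 * Real.sqrt 21 * Real.sqrt 21 * Real.sqrt 21 * Real.sqrt 21 + ((-14553:ℝ)/5000000) * ((6 + Real.sqrt 21) / 20) ^ (r - 1) + ((-4851:ℝ)/10000000) * ((6 + Real.sqrt 21) / 20) ^ (r - 1) * Real.sqrt 21 + ((-453:ℝ)/20000000) * ((6 + Real.sqrt 21) / 20) ^ (r - 1) * Real.sqrt 21 * Real.sqrt 21 + ((19941:ℝ)/3500000000) * ((6 + Real.sqrt 21) / 20) ^ (r - 1) * Real.sqrt 21 * Real.sqrt 21 * Real.sqrt 21 + ((7851:ℝ)/14000000000) * ((6 + Real.sqrt 21) / 20) ^ (r - 1) * Real.sqrt 21 * Real.sqrt 21 * Real.sqrt 21 * Real.sqrt 21 + ((-1851:ℝ)/196000000000) * ((6 + Real.sqrt 21) / 20) ^ (r - 1) * Real.sqrt 21 * Real.sqrt 21 * Real.sqrt 21 * Real.sqrt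 21 * Real.sqrt 21 + ((-543:ℝ)/392000000000) * ((6 + Real.sqrt 21) / 20) ^ (r - 1) * Real.sqrt 21 * Real.sqrt 21 * Real.sqrt 21 * Real.sqrt 21 * Real.sqrt 21 * Real.sqrt 21 + ((14553:ℝ)/5000000) * ((6 - Real.sqrt 21) / 20) ^ (r - 1) + ((-4851:ℝ)/10000000) * ((6 - Real.sqrt 21) / 20) ^ (r - 1) * Real.sqrt 21 + ((453:ℝ)/20000000) * ((6 - Real.sqrt 21) / 20) ^ (r - 1) * Real.sqrt 21 * Real.sqrt 21 + ((19941:ℝ)/3500000000) * ((6 - Real.sqrt 21) / 20) ^ (r - 1) * Real.sqrt 21 * Real.sqrt 21 * Real.sqrt 21 + ((-7851:ℝ)/14000000000) * ((6 - Real.sqrt 21) / 20) ^ (r - 1) * Real.sqrt 21 * Real.sqrt 21 * Real.sqrt 21 * Real.sqrt 21 + ((-1851:ℝ)/196000000000) * ((6 - Real.sqrt 21) / 20) ^ (r - 1) * Real.sqrt 21 * Real.sqrt 21 * Real.sqrt 21 * Real.sqrt 21 * Real.sqrt 21 + ((543:ℝ)/392000000000) * ((6 - Real.sqrt 21) / 20)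 ^ (r - 1) * Real.sqrt 21 * Real.sqrt 21 * Real.sqrt 21 * Real.sqrt 21 * Real.sqrt 21 * Real.sqrt 21 + ((4851:ℝ)/10000000) * r * ((6 + Real.sqrt 21) / 20) ^ (r - 1) * Real.sqrt 21 + ((-217:ℝ)/10000000) * r * ((6 + Real.sqrt 21) / 20) ^ (r - 1) * Real.sqrt 21 * Real.sqrt 21 + ((-447:ℝ)/100000000) * r * ((6 + Real.sqrt 21) / 20) ^ (r - 1) * Real.sqrt 21 * Real.sqrt 21 * Real.sqrt 21 + ((179:ℝ)/700000000) * r * ((6 + Real.sqrt 21) / 20) ^ (r - 1) * Real.sqrt 21 * Real.sqrt 21 * Real.sqrt 21 * Real.sqrt 21 + ((57:ℝ)/5600000000) * r * ((6 + Real.sqrt 21) / 20) ^ (r - 1) * Real.sqrt 21 * Real.sqrt 21 * Real.sqrt 21 * Real.sqrt 21 * Real.sqrt 21 + ((-29:ℝ)/39200000000) * r * ((6 + Real.sqrt 21) / 20) ^ (r - 1) * Real.sqrt 21 * Real.sqrt 21 * Real.sqrt 21 * Real.sqrt 21 * Real.sqrt 21 * Real.sqrt 21 + ((4851:ℝ)/10000000)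 * r * ((6 - Real.sqrt 21) / 20) ^ (r - 1) * Real.sqrt 21 + ((217:ℝ)/10000000) * r * ((6 - Real.sqrt 21) / 20) ^ (r - 1) * Real.sqrt 21 * Real.sqrt 21 + ((-447:ℝ)/100000000) * r * ((6 - Real.sqrt 21) / 20) ^ (r - 1) * Real.sqrt 21 * Real.sqrt 21 * Real.sqrt 21 + ((-179:ℝ)/700000000) * r * ((6 - Real.sqrt 21) / 20) ^ (r - 1) * Real.sqrt 21 * Real.sqrt 21 * Real.sqrt 21 * Real.sqrt 21 + ((57:ℝ)/5600000000) * r * ((6 - Real.sqrt 21) / 20) ^ (r - 1) * Real.sqrt 21 * Real.sqrt 21 * Real.sqrt 21 * Real.sqrt 21 * Real.sqrt 21 + ((29:ℝ)/39200000000) * r * ((6 - Real.sqrt 21) / 20) ^ (r - 1) * Real.sqrt 21 * Real.sqrt 21 * Real.sqrt 21 * Real.sqrt 21 * Real.sqrt 21 * Real.sqrt 21) * s21_sq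


private lemma ha2 (r : ℝ) : a2p r = ((2784:ℝ)/1225) + ((7918:ℝ)/1225) * ((6 + Real.sqrt 21) / 20) ^ (r - 1) + ((2312:ℝ)/1225) * ((6 + Real.sqrt 21) / 20) ^ (r - 1) * Real.sqrt 21 + ((7918:ℝ)/1225) * ((6 - Real.sqrt 21) / 20) ^ (r - 1) + ((-2312:ℝ)/1225) * ((6 - Real.sqrt 21) / 20) ^ (r - 1) * Real.sqrt 21 + ((-38:ℝ)/5) * r * ((6 + Real.sqrt 21) / 20) ^ (r - 1) + ((1:ℝ)/735) * r * ((6 + Real.sqrt 21) / 20) ^ (r - 1) * Real.sqrt 21 + ((-38:ℝ)/5) * r * ((6 - Real.sqrt 21) / 20) ^ (r - 1) + ((-1:ℝ)/735) * r * ((6 - Real.sqrt 21) / 20) ^ (r - 1) * Real.sqrt 21 := by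
  rw [a2p, div_eq_iff Dne, P2p, P2p, hZr r, hWr r]
  simp only [κp, ηp]
  linear_combination (((-59:ℝ)/218750000) * Real.sqrt 21 * Real.sqrt 21 * Real.sqrt 21 + ((87:ℝ)/6125000000) * Real.sqrt 21 * Real.sqrt 21 * Real.sqrt 21 * Real.sqrt 21 * Real.sqrt 21 + ((5733:ℝ)/500000) * ((6 + Real.sqrt 21) / 20) ^ (r - 1) + ((1911:ℝ)/1000000) * ((6 + Real.sqrt 21) / 20) ^ (r - 1) * Real.sqrt 21 + ((353:ℝ)/1000000) * ((6 + Real.sqrt 21) / 20) ^ (r - 1) * Real.sqrt 21 * Real.sqrt 21 + ((-33119:ℝ)/1750000000) * ((6 + Real.sqrt 21) / 20) ^ (r - 1) * Real.sqrt 21 * Real.sqrt 21 * Real.sqrt 21 + ((-31509:ℝ)/7000000000) * ((6 + Real.sqrt 21) / 20) ^ (r - 1) * Real.sqrt 21 * Real.sqrt 21 * Real.sqrt 21 * Real.sqrt 21 + ((3959:ℝ)/98000000000) * ((6 + Real.sqrt 21) / 20) ^ (r - 1) * Real.sqrt 21 * Real.sqrt 21 * Real.sqrt 21 * Real.sqrt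 21 * Real.sqrt 21 + ((289:ℝ)/24500000000) * ((6 + Real.sqrt 21) / 20) ^ (r - 1) * Real.sqrt 21 * Real.sqrt 21 * Real.sqrt 21 * Real.sqrt 21 * Real.sqrt 21 * Real.sqrt 21 + ((-5733:ℝ)/500000) * ((6 - Real.sqrt 21) / 20) ^ (r - 1) + ((1911:ℝ)/1000000) * ((6 - Real.sqrt 21) / 20) ^ (r - 1) * Real.sqrt 21 + ((-353:ℝ)/1000000) * ((6 - Real.sqrt 21) / 20) ^ (r - 1) * Real.sqrt 21 * Real.sqrt 21 + ((-33119:ℝ)/1750000000) * ((6 - Real.sqrt 21) / 20) ^ (r - 1) * Real.sqrt 21 * Real.sqrt 21 * Real.sqrt 21 + ((31509:ℝ)/7000000000) * ((6 - Real.sqrt 21) / 20) ^ (r - 1) * Real.sqrt 21 * Real.sqrt 21 * Real.sqrt 21 * Real.sqrt 21 + ((3959:ℝ)/98000000000) * ((6 - Real.sqrt 21) / 20) ^ (r - 1) * Real.sqrt 21 * Real.sqrt 21 * Real.sqrt 21 * Real.sqrt 21 * Real.sqrt 21 + ((-289:ℝ)/24500000000) * ((6 - Real.sqrt 21) / 20)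 ^ (r - 1) * Real.sqrt 21 * Real.sqrt 21 * Real.sqrt 21 * Real.sqrt 21 * Real.sqrt 21 * Real.sqrt 21 + ((-1911:ℝ)/1000000) * r * ((6 + Real.sqrt 21) / 20) ^ (r - 1) * Real.sqrt 21 + ((-7:ℝ)/1200000) * r * ((6 + Real.sqrt 21) / 20) ^ (r - 1) * Real.sqrt 21 * Real.sqrt 21 + ((953:ℝ)/50000000) * r * ((6 + Real.sqrt 21) / 20) ^ (r - 1) * Real.sqrt 21 * Real.sqrt 21 * Real.sqrt 21 + ((59:ℝ)/2100000000) * r * ((6 + Real.sqrt 21) / 20) ^ (r - 1) * Real.sqrt 21 * Real.sqrt 21 * Real.sqrt 21 * Real.sqrt 21 + ((-19:ℝ)/400000000) * r * ((6 + Real.sqrt 21) / 20) ^ (r - 1) * Real.sqrt 21 * Real.sqrt 21 * Real.sqrt 21 * Real.sqrt 21 * Real.sqrt 21 + ((1:ℝ)/117600000000) * r * ((6 + Real.sqrt 21) / 20) ^ (r - 1) * Real.sqrt 21 * Real.sqrt 21 * Real.sqrt 21 * Real.sqrt 21 * Real.sqrt 21 * Real.sqrt 21 + ((-1911:ℝ)/1000000)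 * r * ((6 - Real.sqrt 21) / 20) ^ (r - 1) * Real.sqrt 21 + ((7:ℝ)/1200000) * r * ((6 - Real.sqrt 21) / 20) ^ (r - 1) * Real.sqrt 21 * Real.sqrt 21 + ((953:ℝ)/50000000) * r * ((6 - Real.sqrt 21) / 20) ^ (r - 1) * Real.sqrt 21 * Real.sqrt 21 * Real.sqrt 21 + ((-59:ℝ)/2100000000) * r * ((6 - Real.sqrt 21) / 20) ^ (r - 1) * Real.sqrt 21 * Real.sqrt 21 * Real.sqrt 21 * Real.sqrt 21 + ((-19:ℝ)/400000000) * r * ((6 - Real.sqrt 21) / 20) ^ (r - 1) * Real.sqrt 21 * Real.sqrt 21 * Real.sqrt 21 * Real.sqrt 21 * Real.sqrt 21 + ((-1:ℝ)/117600000000) * r * ((6 - Real.sqrt 21) / 20) ^ (r - 1) * Real.sqrt 21 * Real.sqrt 21 * Real.sqrt 21 * Real.sqrt 21 * Real.sqrt 21 * Real.sqrt 21) * s21_sq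


private lemma ha3 (r : ℝ) : a3p r = ((-1536:ℝ)/245) + ((-7916:ℝ)/735) * ((6 + Real.sqrt 21) / 20) ^ (r - 1) + ((-2344:ℝ)/735) * ((6 + Real.sqrt 21) / 20) ^ (r - 1) * Real.sqrt 21 + ((-7916:ℝ)/735) * ((6 - Real.sqrt 21) / 20) ^ (r - 1) + ((2344:ℝ)/735) * ((6 - Real.sqrt 21) / 20) ^ (r - 1) * Real.sqrt 21 + ((292:ℝ)/21) * r * ((6 + Real.sqrt 21) / 20) ^ (r - 1) + ((32:ℝ)/49) * r * ((6 + Real.sqrt 21) / 20) ^ (r - 1) * Real.sqrt 21 + ((292:ℝ)/21) * r * ((6 - Real.sqrt 21) / 20) ^ (r - 1) + ((-32:ℝ)/49) * r * ((6 - Real.sqrt 21) / 20) ^ (r - 1) * Real.sqrt 21 := by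
  rw [a3p, div_eq_iff Dne, P3p, P3p, hZr r, hWr r]
  simp only [κp, ηp]
  linear_combination (((159:ℝ)/10937500) * Real.sqrt 21 * Real.sqrt 21 * Real.sqrt 21 + ((-3:ℝ)/76562500) * Real.sqrt 21 * Real.sqrt 21 * Real.sqrt 21 * Real.sqrt 21 * Real.sqrt 21 + ((-931:ℝ)/50000) * ((6 + Real.sqrt 21) / 20) ^ (r - 1) + ((-931:ℝ)/300000) * ((6 + Real.sqrt 21) / 20) ^ (r - 1) * Real.sqrt 21 + ((-191:ℝ)/300000) * ((6 + Real.sqrt 21) / 20) ^ (r - 1) * Real.sqrt 21 * Real.sqrt 21 + ((13439:ℝ)/525000000) * ((6 + Real.sqrt 21) / 20) ^ (r - 1) * Real.sqrt 21 * Real.sqrt 21 * Real.sqrt 21 + ((15529:ℝ)/2100000000) * ((6 + Real.sqrt 21) / 20) ^ (r - 1) * Real.sqrt 21 * Real.sqrt 21 * Real.sqrt 21 * Real.sqrt 21 + ((-1979:ℝ)/29400000000) * ((6 + Real.sqrt 21) / 20) ^ (r - 1) * Real.sqrt 21 * Real.sqrt 21 * Real.sqrt 21 * Real.sqrt 21 *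 Real.sqrt 21 + ((-293:ℝ)/14700000000) * ((6 + Real.sqrt 21) / 20) ^ (r - 1) * Real.sqrt 21 * Real.sqrt 21 * Real.sqrt 21 * Real.sqrt 21 * Real.sqrt 21 * Real.sqrt 21 + ((931:ℝ)/50000) * ((6 - Real.sqrt 21) / 20) ^ (r - 1) + ((-931:ℝ)/300000) * ((6 - Real.sqrt 21) / 20) ^ (r - 1) * Real.sqrt 21 + ((191:ℝ)/300000) * ((6 - Real.sqrt 21) / 20) ^ (r - 1) * Real.sqrt 21 * Real.sqrt 21 + ((13439:ℝ)/525000000) * ((6 - Real.sqrt 21) / 20) ^ (r - 1) * Real.sqrt 21 * Real.sqrt 21 * Real.sqrt 21 + ((-15529:ℝ)/2100000000) * ((6 - Real.sqrt 21) / 20) ^ (r - 1) * Real.sqrt 21 * Real.sqrt 21 * Real.sqrt 21 * Real.sqrt 21 + ((-1979:ℝ)/29400000000) * ((6 - Real.sqrt 21) / 20) ^ (r - 1) * Real.sqrt 21 * Real.sqrt 21 * Real.sqrt 21 * Real.sqrt 21 * Real.sqrt 21 + ((293:ℝ)/14700000000) * ((6 - Real.sqrt 21) / 20) ^ (r - 1)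 * Real.sqrt 21 * Real.sqrt 21 * Real.sqrt 21 * Real.sqrt 21 * Real.sqrt 21 * Real.sqrt 21 + ((931:ℝ)/300000) * r * ((6 + Real.sqrt 21) / 20) ^ (r - 1) * Real.sqrt 21 + ((7:ℝ)/50000) * r * ((6 + Real.sqrt 21) / 20) ^ (r - 1) * Real.sqrt 21 * Real.sqrt 21 + ((-493:ℝ)/15000000) * r * ((6 + Real.sqrt 21) / 20) ^ (r - 1) * Real.sqrt 21 * Real.sqrt 21 * Real.sqrt 21 + ((-53:ℝ)/35000000) * r * ((6 + Real.sqrt 21) / 20) ^ (r - 1) * Real.sqrt 21 * Real.sqrt 21 * Real.sqrt 21 * Real.sqrt 21 + ((73:ℝ)/840000000) * r * ((6 + Real.sqrt 21) / 20) ^ (r - 1) * Real.sqrt 21 * Real.sqrt 21 * Real.sqrt 21 * Real.sqrt 21 * Real.sqrt 21 + ((1:ℝ)/245000000) * r * ((6 + Real.sqrt 21) / 20) ^ (r - 1) * Real.sqrt 21 * Real.sqrt 21 * Real.sqrt 21 * Real.sqrt 21 * Real.sqrt 21 * Real.sqrt 21 + ((931:ℝ)/300000) * r * ((6 - Real.sqrt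 21) / 20) ^ (r - 1) * Real.sqrt 21 + ((-7:ℝ)/50000) * r * ((6 - Real.sqrt 21) / 20) ^ (r - 1) * Real.sqrt 21 * Real.sqrt 21 + ((-493:ℝ)/15000000) * r * ((6 - Real.sqrt 21) / 20) ^ (r - 1) * Real.sqrt 21 * Real.sqrt 21 * Real.sqrt 21 + ((53:ℝ)/35000000) * r * ((6 - Real.sqrt 21) / 20) ^ (r - 1) * Real.sqrt 21 * Real.sqrt 21 * Real.sqrt 21 * Real.sqrt 21 + ((73:ℝ)/840000000) * r * ((6 - Real.sqrt 21) / 20) ^ (r - 1) * Real.sqrt 21 * Real.sqrt 21 * Real.sqrt 21 * Real.sqrt 21 * Real.sqrt 21 + ((-1:ℝ)/245000000) * r * ((6 - Real.sqrt 21) / 20) ^ (r - 1) * Real.sqrt 21 * Real.sqrt 21 * Real.sqrt 21 * Real.sqrt 21 * Real.sqrt 21 * Real.sqrt 21) * s21_sq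


private lemma ha4 (r : ℝ) : a4p r = ((256:ℝ)/49) + ((736:ℝ)/147) * ((6 + Real.sqrt 21) / 20) ^ (r - 1) + ((32:ℝ)/21) * ((6 + Real.sqrt 21) / 20) ^ (r - 1) * Real.sqrt 21 + ((736:ℝ)/147) * ((6 - Real.sqrt 21) / 20) ^ (r - 1) + ((-32:ℝ)/21) * ((6 - Real.sqrt 21) / 20) ^ (r - 1) * Real.sqrt 21 + ((-160:ℝ)/21) * r * ((6 + Real.sqrt 21) / 20) ^ (r - 1) + ((-80:ℝ)/147) * r * ((6 + Real.sqrt 21) / 20) ^ (r - 1) * Real.sqrt 21 + ((-160:ℝ)/21) * r * ((6 - Real.sqrt 21) / 20) ^ (r - 1) + ((80:ℝ)/147) * r * ((6 - Real.sqrt 21) / 20) ^ (r - 1) * Real.sqrt 21 := by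
  rw [a4p, div_eq_iff Dne, P4p, P4p, hZr r, hWr r]
  simp only [κp, ηp]
  linear_combination (((-53:ℝ)/4375000) * Real.sqrt 21 * Real.sqrt 21 * Real.sqrt 21 + ((1:ℝ)/30625000) * Real.sqrt 21 * Real.sqrt 21 * Real.sqrt 21 * Real.sqrt 21 * Real.sqrt 21 + ((49:ℝ)/5000) * ((6 + Real.sqrt 21) / 20) ^ (r - 1) + ((49:ℝ)/30000) * ((6 + Real.sqrt 21) / 20) ^ (r - 1) * Real.sqrt 21 + ((19:ℝ)/60000) * ((6 + Real.sqrt 21) / 20) ^ (r - 1) * Real.sqrt 21 * Real.sqrt 21 + ((-1219:ℝ)/105000000) * ((6 + Real.sqrt 21) / 20) ^ (r - 1) * Real.sqrt 21 * Real.sqrt 21 * Real.sqrt 21 + ((-53:ℝ)/15000000) * ((6 + Real.sqrt 21) / 20) ^ (r - 1) * Real.sqrt 21 * Real.sqrt 21 * Real.sqrt 21 * Real.sqrt 21 + ((23:ℝ)/735000000) * ((6 + Real.sqrt 21) / 20) ^ (r - 1) * Real.sqrt 21 * Real.sqrt 21 * Real.sqrt 21 * Real.sqrt 21 * Real.sqrt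 21 + ((1:ℝ)/105000000) * ((6 + Real.sqrt 21) / 20) ^ (r - 1) * Real.sqrt 21 * Real.sqrt 21 * Real.sqrt 21 * Real.sqrt 21 * Real.sqrt 21 * Real.sqrt 21 + ((-49:ℝ)/5000) * ((6 - Real.sqrt 21) / 20) ^ (r - 1) + ((49:ℝ)/30000) * ((6 - Real.sqrt 21) / 20) ^ (r - 1) * Real.sqrt 21 + ((-19:ℝ)/60000) * ((6 - Real.sqrt 21) / 20) ^ (r - 1) * Real.sqrt 21 * Real.sqrt 21 + ((-1219:ℝ)/105000000) * ((6 - Real.sqrt 21) / 20) ^ (r - 1) * Real.sqrt 21 * Real.sqrt 21 * Real.sqrt 21 + ((53:ℝ)/15000000) * ((6 - Real.sqrt 21) / 20) ^ (r - 1) * Real.sqrt 21 * Real.sqrt 21 * Real.sqrt 21 * Real.sqrt 21 + ((23:ℝ)/735000000) * ((6 - Real.sqrt 21) / 20) ^ (r - 1) * Real.sqrt 21 * Real.sqrt 21 * Real.sqrt 21 * Real.sqrt 21 * Real.sqrt 21 + ((-1:ℝ)/105000000) * ((6 - Real.sqrt 21) / 20) ^ (r - 1) * Real.sqrt 21 *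 Real.sqrt 21 * Real.sqrt 21 * Real.sqrt 21 * Real.sqrt 21 * Real.sqrt 21 + ((-49:ℝ)/30000) * r * ((6 + Real.sqrt 21) / 20) ^ (r - 1) * Real.sqrt 21 + ((-7:ℝ)/60000) * r * ((6 + Real.sqrt 21) / 20) ^ (r - 1) * Real.sqrt 21 * Real.sqrt 21 + ((53:ℝ)/3000000) * r * ((6 + Real.sqrt 21) / 20) ^ (r - 1) * Real.sqrt 21 * Real.sqrt 21 * Real.sqrt 21 + ((53:ℝ)/42000000) * r * ((6 + Real.sqrt 21) / 20) ^ (r - 1) * Real.sqrt 21 * Real.sqrt 21 * Real.sqrt 21 * Real.sqrt 21 + ((-1:ℝ)/21000000) * r * ((6 + Real.sqrt 21) / 20) ^ (r - 1) * Real.sqrt 21 * Real.sqrt 21 * Real.sqrt 21 * Real.sqrt 21 * Real.sqrt 21 + ((-1:ℝ)/294000000) * r * ((6 + Real.sqrt 21) / 20) ^ (r - 1) * Real.sqrt 21 * Real.sqrt 21 * Real.sqrt 21 * Real.sqrt 21 * Real.sqrt 21 * Real.sqrt 21 + ((-49:ℝ)/30000) * r * ((6 - Real.sqrt 21) / 20)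 ^ (r - 1) * Real.sqrt 21 + ((7:ℝ)/60000) * r * ((6 - Real.sqrt 21) / 20) ^ (r - 1) * Real.sqrt 21 * Real.sqrt 21 + ((53:ℝ)/3000000) * r * ((6 - Real.sqrt 21) / 20) ^ (r - 1) * Real.sqrt 21 * Real.sqrt 21 * Real.sqrt 21 + ((-53:ℝ)/42000000) * r * ((6 - Real.sqrt 21) / 20) ^ (r - 1) * Real.sqrt 21 * Real.sqrt 21 * Real.sqrt 21 * Real.sqrt 21 + ((-1:ℝ)/21000000) * r * ((6 - Real.sqrt 21) / 20) ^ (r - 1) * Real.sqrt 21 * Real.sqrt 21 * Real.sqrt 21 * Real.sqrt 21 * Real.sqrt 21 + ((1:ℝ)/294000000) * r * ((6 - Real.sqrt 21) / 20) ^ (r - 1) * Real.sqrt 21 * Real.sqrt 21 * Real.sqrt 21 * Real.sqrt 21 * Real.sqrt 21 * Real.sqrt 21) * s21_sq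


/-- The exponent `ρ_r⁺` computed from the Rankin coefficients `a_j⁺` equals
`((102 + 7√21)/210)·((6 − √21)/5)^r + ((102 − 7√21)/210)·((6 + √21)/5)^r + 4^r/35 − 1`. -/
theorem rho_plus_eq (r : ℝ) (hr : 0 < r) :
    (2 : ℝ) ^ (2 * r - 8) *
        (2 ^ 8 * a0p r + 2 ^ 6 * a1p r + 2 ^ 4 * 2 * a2p r + 2 ^ 2 * 5 * a3p r + 14 * a4p r)
      - 1 =
      (102 + 7 * Real.sqrt 21) / 210 * ((6 - Real.sqrt 21) / 5) ^ r
        + (102 - 7 * Real.sqrt 21) / 210 * ((6 + Real.sqrt 21) / 5) ^ r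
        + (4 : ℝ) ^ r / 35 - 1 := by
  have hZ := hZr r
  have hW := hWr r
  have e3 : (2:ℝ) ^ (2 * r - 8) = (4:ℝ) ^ r / 256 := by
    have h4 : (4:ℝ) ^ r = (2:ℝ) ^ r * (2:ℝ) ^ r := by
      rw [← Real.mul_rpow (by norm_num) (by norm_num : (0:ℝ) ≤ 2)]; norm_num
    rw [Real.rpow_sub (by norm_num : (0:ℝ) < 2), two_mul, Real.rpow_add (by norm_num : (0:ℝ) < 2), h4,
      show (8:ℝ) = ((8:ℕ):ℝ) by norm_num, Real.rpow_natCast]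
    norm_num
  have e4 : ((6 - Real.sqrt 21) / 5 : ℝ) ^ r = (4:ℝ) ^ r * (κp ^ (r - 1) * κp) := by
    rw [← hZ, ← Real.mul_rpow (by norm_num) (le_of_lt kp_pos)]
    congr 1
    unfold κp; ring
  have e5 : ((6 + Real.sqrt 21) / 5 : ℝ) ^ r = (4:ℝ) ^ r * (ηp ^ (r - 1) * ηp) := by
    rw [← hW, ← Real.mul_rpow (by norm_num) (le_of_lt ep_pos)]
    congr 1
    unfold ηp; ring
  rw [a0p, ha1 r, ha2 r, ha3 r, ha4 r, e3, e4, e5]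
  simp only [κp, ηp]
  linear_combination (((1:ℝ)/600) * ((6 + Real.sqrt 21) / 20) ^ (r - 1) * (4:ℝ) ^ r + ((1:ℝ)/600) * ((6 - Real.sqrt 21) / 20) ^ (r - 1) * (4:ℝ) ^ r) * s21_sq
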